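/- Let A be a finite abelian group, M a countable monoid, F: A^M → A^M a linear cellular automaton, and μ a harmonically mixing probability measure on A^M. If F is diffusive (for every nontrivial character χ, rank(χ ∘ F^n) → ∞ as n → ∞), then F^n μ converges weak* to the Haar measure on A^M as n → ∞. -/

import Mathlib

open MeasureTheory Filter

set_option linter.unusedSectionVars false
set_option maxHeartbeats 1000000

/-- Evaluation at `a` of the character of `A^M` with coefficient system `χ`. -/
noncomputable def charEval {A M : Type*} [AddCommGroup A] (χ : M → AddChar A ℂ)
    (a : M → A) : ℂ :=
  ∏ᶠ m, χ m (a m)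

/-- Harmonic mixing of a measure on `A^M`. -/
def HarmonicallyMixing {A M : Type*} [AddCommGroup A] [MeasurableSpace A]
    (μ : Measure (M → A)) : Prop :=
  ∀ ε > 0, ∃ R : ℕ, ∀ χ : M → AddChar A ℂ, {m | χ m ≠ 1}.Finite →
    R < {m | χ m ≠ 1}.ncard → ‖∫ a, charEval χ a ∂μ‖ < ε

section Aux

variable {A M : Type*} [AddCommGroup A] [Fintype A]

lemma charEval_eq_prod (χ : M → AddChar A ℂ) {s : Finset M}
    (hs : {m | χ m ≠ 1} ⊆ ↑s) (a : M → A) :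
    charEval χ a = ∏ m ∈ s, χ m (a m) := by
  apply finprod_eq_prod_of_mulSupport_subset
  intro m hm
  refine hs ?_
  intro h1
  exact hm (show χ m (a m) = 1 by rw [h1]; simp)

lemma charEval_zero (χ : M → AddChar A ℂ) : charEval χ 0 = 1 := by
  unfold charEval
  have : ∀ m : M, χ m ((0 : M → A) m) = 1 := fun m => by simp [AddChar.map_zero_eq_one]
  simp only [this]
  exact finprod_one

lemma charEval_add (χ : M → AddChar A ℂ) (hχ : {m | χ m ≠ 1}.Finite) (x y : M → A) :
    charEval χ (x + y) = charEval χ x * charEval χ y := by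
  have hs : {m | χ m ≠ 1} ⊆ ↑hχ.toFinset := by simp
  rw [charEval_eq_prod χ hs, charEval_eq_prod χ hs, charEval_eq_prod χ hs,
    ← Finset.prod_mul_distrib]
  exact Finset.prod_congr rfl fun m _ => by simp [AddChar.map_add_eq_mul]

lemma norm_charEval (χ : M → AddChar A ℂ) (hχ : {m | χ m ≠ 1}.Finite) (a : M → A) :
    ‖charEval χ a‖ = 1 := by
  have hs : {m | χ m ≠ 1} ⊆ ↑hχ.toFinset := by simp
  rw [charEval_eq_prod χ hs, norm_prod]
  exact Finset.prod_eq_one fun m _ => AddChar.norm_apply _ _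

lemma charEval_continuous [TopologicalSpace A] [DiscreteTopology A] (χ : M → AddChar A ℂ)
    (hχ : {m | χ m ≠ 1}.Finite) : Continuous (charEval χ) := by
  have hs : {m | χ m ≠ 1} ⊆ ↑hχ.toFinset := by simp
  have : charEval χ = fun a => ∏ m ∈ hχ.toFinset, χ m (a m) :=
    funext fun a => charEval_eq_prod χ hs a
  rw [this]
  exact continuous_finset_prod _ fun m _ =>
    (continuous_of_discreteTopology (f := fun b : A => χ m b)).comp (continuous_apply m)

lemma cMapSum {c : (M → A) → ℂ} (h0 : c 0 = 1)
    (hadd : ∀ x y, c (x + y) = c x * c y) {ι : Type*} (t : Finset ι) (v : ι → M → A) :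
    c (∑ i ∈ t, v i) = ∏ i ∈ t, c (v i) := by
  classical
  induction t using Finset.induction with
  | empty => simpa using h0
  | insert _ _ hni ih =>
      rw [Finset.sum_insert hni, Finset.prod_insert hni, hadd, ih]

lemma cMapNsmul {c : (M → A) → ℂ} (h0 : c 0 = 1)
    (hadd : ∀ x y, c (x + y) = c x * c y) (x : M → A) (k : ℕ) :
    c (k • x) = c x ^ k := by
  induction k with
  | zero => simpa using h0
  | succ k ih => rw [succ_nsmul, hadd, ih, pow_succ]

/-- Any continuous multiplicative-valued character of `A^M` is given by a finitely
supported coefficient system. -/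
lemma exists_coeffs [TopologicalSpace A] {c : (M → A) → ℂ}
    (hc : Continuous c) (h0 : c 0 = 1) (hadd : ∀ x y, c (x + y) = c x * c y) :
    ∃ ψ : M → AddChar A ℂ, {m | ψ m ≠ 1}.Finite ∧ ∀ a, charEval ψ a = c a := by
  classical
  have hU : IsOpen (c ⁻¹' Metric.ball 1 1) := hc.isOpen_preimage _ Metric.isOpen_ball
  have h0U : (0 : M → A) ∈ c ⁻¹' Metric.ball 1 1 := by
    simp [h0, Metric.mem_ball]
  obtain ⟨I, u, hu, hsub⟩ := isOpen_pi_iff.mp hU 0 h0U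
  have key : ∀ x : M → A, (∀ m ∈ I, x m = 0) → c x = 1 := by
    intro x hx
    have hball : ∀ k : ℕ, ‖c x ^ k - 1‖ < 1 := by
      intro k
      have hmem : (k • x) ∈ (↑I : Set M).pi u := by
        intro m hm
        have hx0 : (k • x) m = 0 := by simp [hx m hm]
        rw [hx0]
        simpa using (hu m hm).2
      have hball' := hsub hmem
      rw [Set.mem_preimage, Metric.mem_ball, dist_eq_norm] at hball'
      rwa [← cMapNsmul h0 hadd]
    set N := Fintype.card A with hNdef
    have hNpos : 0 < N := Fintype.card_pos
    have hN : c x ^ N = 1 := by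
      rw [← cMapNsmul h0 hadd]
      have : N • x = 0 := funext fun m => by
        show N • x m = 0
        exact card_nsmul_eq_zero
      rw [this, h0]
    by_contra hne
    have hg : ∑ i ∈ Finset.range N, c x ^ i = 0 := by
      rw [geom_sum_eq hne, hN]
      simp
    have h1 : (N : ℂ) = ∑ i ∈ Finset.range N, (1 - c x ^ i) := by
      rw [Finset.sum_sub_distrib, hg, sub_zero, Finset.sum_const, Finset.card_range]
      simp
    have hle : (N : ℝ) ≤ ∑ i ∈ Finset.range N, ‖1 - c x ^ i‖ := by
      calc (N : ℝ) = ‖(N : ℂ)‖ := by simp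
        _ = ‖∑ i ∈ Finset.range N, (1 - c x ^ i)‖ := by rw [h1]
        _ ≤ ∑ i ∈ Finset.range N, ‖1 - c x ^ i‖ := norm_sum_le _ _
    have hlt : ∑ i ∈ Finset.range N, ‖1 - c x ^ i‖ < ∑ i ∈ Finset.range N, (1 : ℝ) :=
      Finset.sum_lt_sum_of_nonempty (by simp [Finset.nonempty_range_iff, hNpos.ne'])
        fun i _ => by rw [norm_sub_rev]; exact hball i
    simp only [Finset.sum_const, Finset.card_range, nsmul_eq_mul, mul_one] at hlt
    linarith
  refine ⟨fun m =>
    { toFun := fun b => c (Pi.single m b)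
      map_zero_eq_one' := by show c (Pi.single m 0) = 1; rw [Pi.single_zero]; exact h0
      map_add_eq_mul' := fun b b' => by
        show c (Pi.single m (b + b')) = c (Pi.single m b) * c (Pi.single m b')
        rw [Pi.single_add]; exact hadd _ _ }, ?_, ?_⟩
  · apply Set.Finite.subset I.finite_toSet
    intro m hm
    by_contra hmI
    apply hm
    apply AddChar.ext
    intro b
    show c (Pi.single m b) = 1
    refine key _ fun m' hm' => ?_
    apply Pi.single_eq_of_ne
    intro h
    exact hmI (by rw [← h]; exact_mod_cast hm')
  · intro a
    set ψ : M → AddChar A ℂ := fun m =>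
      { toFun := fun b => c (Pi.single m b)
        map_zero_eq_one' := by show c (Pi.single m 0) = 1; rw [Pi.single_zero]; exact h0
        map_add_eq_mul' := fun b b' => by
          show c (Pi.single m (b + b')) = c (Pi.single m b) * c (Pi.single m b')
          rw [Pi.single_add]; exact hadd _ _ } with hψ
    show charEval ψ a = c a
    have hs : {m | ψ m ≠ 1} ⊆ ↑I := by
      intro m hm
      by_contra hmI
      apply hm
      apply AddChar.ext
      intro b
      show c (Pi.single m b) = 1
      refine key _ fun m' hm' => ?_
      apply Pi.single_eq_of_ne
      intro h
      exact hmI (by rw [← h]; exact_mod_cast hm')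
    rw [charEval_eq_prod ψ hs a]
    have h2 : ∏ m ∈ I, ψ m (a m) = c (∑ m ∈ I, Pi.single m (a m)) := by
      rw [cMapSum h0 hadd]
      rfl
    set y := ∑ m ∈ I, Pi.single m (a m) with hy
    have h4 : c (a - y) = 1 := by
      apply key
      intro m hm
      show a m - y m = 0
      have : y m = a m := by
        rw [hy]
        show (∑ m' ∈ I, Pi.single m' (a m')) m = a m
        rw [Finset.sum_apply]
        rw [Finset.sum_pi_single]
        simp [hm]
      rw [this, sub_self]
    have h5 : c a = c y * c (a - y) := by
      rw [← hadd]
      congr 1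
      abel
    rw [h2, h5, h4, mul_one]

end Aux

/-- A probability measure giving every cylinder its uniform mass forces all subsets of
the (finite) alphabet to be measurable. -/
lemma allMeasurable {A : Type*} [Fintype A] [MeasurableSpace A] {M : Type*} (m₀ : M)
    (lam : Measure (M → A)) [IsProbabilityMeasure lam]
    (hlam : ∀ (s : Finset M) (f : M → A),
      lam {a | ∀ m ∈ s, a m = f m} = (1 / (Fintype.card A : ENNReal)) ^ s.card)
    (S : Set A) : MeasurableSet S := by
  classical
  have hsep : ∀ b c : A, b ≠ c → ∃ T : Set A, MeasurableSet T ∧ b ∈ T ∧ c ∉ T := by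
    intro b c hbc
    by_contra hcon
    push_neg at hcon
    have hall : ∀ T : Set A, MeasurableSet T → b ∈ T → c ∈ T := fun T hT hb => hcon T hT hb
    have hiff : ∀ T : Set A, MeasurableSet T → (b ∈ T ↔ c ∈ T) := by
      intro T hT
      refine ⟨hall T hT, fun hc => ?_⟩
      by_contra hb
      exact hall Tᶜ hT.compl hb hc
    have hτS : ∀ T : Set A, MeasurableSet T → ∀ x, (Equiv.swap b c x ∈ T ↔ x ∈ T) := by
      intro T hT x
      rcases eq_or_ne x b with rfl | hxb
      · rw [Equiv.swap_apply_left]; exact (hiff T hT).symm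
      rcases eq_or_ne x c with rfl | hxc
      · rw [Equiv.swap_apply_right]; exact hiff T hT
      · rw [Equiv.swap_apply_of_ne_of_ne hxb hxc]
    set Φ : (M → A) → (M → A) := fun a m => Equiv.swap b c (a m) with hΦ
    have hinv : ∀ E : Set (M → A), MeasurableSet E → Φ ⁻¹' E = E := by
      intro E hE
      have hE' : MeasurableSet[MeasurableSpace.generateFrom
          {B : Set (M → A) | ∃ (m : M) (T : Set A), MeasurableSet T ∧
            Function.eval m ⁻¹' T = B}] E := by
        rw [← MeasurableSpace.pi_eq_generateFrom_projections]
        exact hE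
      refine MeasurableSpace.generateFrom_induction _
        (p := fun s _ => Φ ⁻¹' s = s) ?_ ?_ ?_ ?_ E hE'
      · rintro t ⟨m, T, hT, rfl⟩ _
        ext a
        simp only [Set.mem_preimage, Function.eval]
        exact hτS T hT (a m)
      · rfl
      · intro t _ ih
        rw [Set.preimage_compl, ih]
      · intro f _ ih
        rw [Set.preimage_iUnion]
        exact Set.iUnion_congr ih
    haveI : Nonempty A := ⟨b⟩
    set n : ENNReal := (Fintype.card A : ENNReal) with hn
    have hn0 : n ≠ 0 := by
      rw [hn]
      exact_mod_cast Fintype.card_ne_zero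
    have hntop : n ≠ ⊤ := by simp [hn]
    let C : A → Set (M → A) := fun d => {a | a m₀ = d}
    have hC : ∀ d, lam (C d) = n⁻¹ := by
      intro d
      have h := hlam {m₀} (fun _ => d)
      have hset : {a : M → A | ∀ m ∈ ({m₀} : Finset M), a m = d} = C d := by
        ext a; simp [C]
      rw [hset] at h
      simpa [one_div] using h
    have hiInf : lam (C b ∪ C c) ≤
        ⨅ (t : Set (M → A)) (_ : C b ⊆ t) (_ : MeasurableSet t), lam t := by
      refine le_iInf fun t => le_iInf fun hbt => le_iInf fun ht => ?_
      refine measure_mono (Set.union_subset hbt fun a ha => ?_)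
      have haC : Φ a ∈ C b := by
        have hac : a m₀ = c := ha
        simp only [C, Set.mem_setOf_eq, hΦ, hac, Equiv.swap_apply_right]
      have hat : Φ a ∈ t := hbt haC
      rw [← hinv t ht]
      exact hat
    have hunion : lam (C b ∪ C c) ≤ n⁻¹ :=
      (hiInf.trans (measure_eq_iInf (C b)).ge).trans (hC b).le
    have hcard : 2 ≤ Fintype.card A := Fintype.one_lt_card_iff_nontrivial.mpr ⟨⟨b, c, hbc⟩⟩
    let t : Finset A := (Finset.univ.erase b).erase c
    have htcard : t.card = Fintype.card A - 2 := by
      have hcb : c ∈ Finset.univ.erase b := Finset.mem_erase.mpr ⟨Ne.symm hbc, Finset.mem_univ c⟩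
      rw [Finset.card_erase_of_mem hcb, Finset.card_erase_of_mem (Finset.mem_univ b),
        Finset.card_univ]
      omega
    have hcover : (Set.univ : Set (M → A)) ⊆ (C b ∪ C c) ∪ ⋃ d ∈ t, C d := by
      intro a _
      rcases eq_or_ne (a m₀) b with h | h
      · exact Or.inl (Or.inl h)
      rcases eq_or_ne (a m₀) c with h2 | h2
      · exact Or.inl (Or.inr h2)
      · refine Or.inr (Set.mem_biUnion ?_ rfl)
        exact Finset.mem_erase.mpr ⟨h2, Finset.mem_erase.mpr ⟨h, Finset.mem_univ _⟩⟩
    have hbound : (1 : ENNReal) ≤ (Fintype.card A - 1 : ℕ) * n⁻¹ := by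
      calc (1 : ENNReal) = lam Set.univ := measure_univ.symm
        _ ≤ lam ((C b ∪ C c) ∪ ⋃ d ∈ t, C d) := measure_mono hcover
        _ ≤ lam (C b ∪ C c) + lam (⋃ d ∈ t, C d) := measure_union_le _ _
        _ ≤ n⁻¹ + ∑ d ∈ t, lam (C d) := add_le_add hunion (measure_biUnion_finset_le _ _)
        _ = n⁻¹ + (Fintype.card A - 2 : ℕ) * n⁻¹ := by
            rw [Finset.sum_congr rfl fun d _ => hC d, Finset.sum_const, htcard, nsmul_eq_mul]
        _ = (Fintype.card A - 1 : ℕ) * n⁻¹ := by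
            have hq : ((Fintype.card A - 1 : ℕ) : ENNReal) =
                1 + ((Fintype.card A - 2 : ℕ) : ENNReal) := by
              have hq' : Fintype.card A - 1 = 1 + (Fintype.card A - 2) := by omega
              rw [hq']
              push_cast
              ring
            rw [hq, add_mul, one_mul]
    have hlt : ((Fintype.card A - 1 : ℕ) : ENNReal) * n⁻¹ < 1 := by
      rw [← div_eq_mul_inv, ENNReal.div_lt_iff (Or.inl hn0) (Or.inl hntop), one_mul, hn]
      exact_mod_cast Nat.sub_lt (by omega) one_pos
    exact absurd hbound (not_le.mpr hlt)
  have hsing : ∀ b : A, MeasurableSet {b} := by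
    intro b
    have hsep' : ∀ c : A, ∃ T : Set A, MeasurableSet T ∧ b ∈ T ∧ (c ≠ b → c ∉ T) := by
      intro c
      by_cases h : c = b
      · exact ⟨Set.univ, MeasurableSet.univ, trivial, fun hc => absurd h hc⟩
      · obtain ⟨T, h1, h2, h3⟩ := hsep b c (Ne.symm h)
        exact ⟨T, h1, h2, fun _ => h3⟩
    choose T hTm hTb hTc using hsep'
    have : ({b} : Set A) = ⋂ c, T c := by
      ext x
      simp only [Set.mem_singleton_iff, Set.mem_iInter]
      constructor
      · rintro rfl c; exact hTb c
      · intro hx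
        by_contra hxb
        exact hTc x hxb (hx x)
    rw [this]
    exact MeasurableSet.iInter fun c => hTm c
  have : S = ⋃ b ∈ S, {b} := (Set.biUnion_of_singleton S).symm
  rw [this]
  exact MeasurableSet.biUnion (Set.to_countable S) fun b _ => hsing b

/-- Nontrivial characters integrate to zero against the Haar measure. -/
lemma integral_charEval_haar {A M : Type*} [AddCommGroup A] [Fintype A] [MeasurableSpace A]
    [MeasurableSingletonClass A] [Countable M]
    (lam : Measure (M → A)) [IsProbabilityMeasure lam]
    (hlam : ∀ (s : Finset M) (f : M → A),
      lam {a | ∀ m ∈ s, a m = f m} = (1 / (Fintype.card A : ENNReal)) ^ s.card)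
    (χ : M → AddChar A ℂ) (hχ : {m | χ m ≠ 1}.Finite) (hne : ∃ m, χ m ≠ 1) :
    ∫ a, charEval χ a ∂lam = 0 := by
  classical
  set s : Finset M := hχ.toFinset with hsdef
  have hssub : {m | χ m ≠ 1} ⊆ ↑s := by simp [hsdef]
  set π : (M → A) → (↥s → A) := fun a m => a (m : M) with hπdef
  have hπ : Measurable π := measurable_pi_lambda _ fun m => measurable_pi_apply _
  have hrw : ∀ a, charEval χ a = (fun g : ↥s → A => ∏ m : ↥s, χ (m : M) (g m)) (π a) := by
    intro a
    rw [charEval_eq_prod χ hssub a]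
    exact (Finset.prod_coe_sort s (fun m => χ m (a m))).symm
  have hmeas : Measurable (fun g : ↥s → A => ∏ m : ↥s, χ (m : M) (g m)) :=
    measurable_of_countable _
  calc ∫ a, charEval χ a ∂lam
      = ∫ a, (fun g : ↥s → A => ∏ m : ↥s, χ (m : M) (g m)) (π a) ∂lam :=
        integral_congr_ae (Eventually.of_forall hrw)
    _ = ∫ g, ∏ m : ↥s, χ (m : M) (g m) ∂(lam.map π) :=
        (integral_map hπ.aemeasurable hmeas.aestronglyMeasurable).symm
    _ = ∑ g : ↥s → A, ((lam.map π) {g}).toReal • ∏ m : ↥s, χ (m : M) (g m) := by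
        haveI : IsProbabilityMeasure (lam.map π) := Measure.isProbabilityMeasure_map hπ.aemeasurable
        exact integral_fintype (Integrable.of_finite)
    _ = ∑ g : ↥s → A, ((1 / (Fintype.card A : ENNReal)) ^ s.card).toReal
          • ∏ m : ↥s, χ (m : M) (g m) := by
        refine Finset.sum_congr rfl fun g _ => ?_
        congr 1
        rw [Measure.map_apply hπ (MeasurableSet.singleton g)]
        have hpre : π ⁻¹' {g} = {a : M → A | ∀ m ∈ s, a m =
            (fun m' => if h : m' ∈ s then g ⟨m', h⟩ else 0) m} := by
          ext a
          simp only [Set.mem_preimage, Set.mem_singleton_iff, Set.mem_setOf_eq, funext_iff]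
          constructor
          · intro h m hm
            rw [dif_pos hm]
            exact h ⟨m, hm⟩
          · intro h m
            have := h (m : M) m.2
            rwa [dif_pos m.2] at this
        rw [hpre, hlam]
    _ = ((1 / (Fintype.card A : ENNReal)) ^ s.card).toReal
          • ∑ g : ↥s → A, ∏ m : ↥s, χ (m : M) (g m) := by rw [Finset.smul_sum]
    _ = 0 := by
        have hps : ∑ g : ↥s → A, ∏ m : ↥s, χ (m : M) (g m)
            = ∏ m : ↥s, ∑ j : A, χ (m : M) j := by
          rw [Finset.prod_univ_sum]
          rw [Fintype.piFinset_univ]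
        rw [hps]
        obtain ⟨m, hm⟩ := hne
        have hms : m ∈ s := by simp [hsdef, hm]
        have hzero : ∑ j : A, χ m j = 0 := by
          apply AddChar.sum_eq_zero_iff_ne_zero.mpr
          intro h0
          exact hm (by rw [h0]; rfl)
        rw [Finset.prod_eq_zero (Finset.mem_univ (⟨m, hms⟩ : ↥s)) hzero, smul_zero]

/-- A diffusive linear cellular automaton pushes any harmonically mixing
probability measure to the Haar measure in the weak* topology.

Here `F` is a linear CA on `A^M` (continuous, additive, commuting with all
shifts), diffusivity says that for every nontrivial character `χ` the rank of
`χ ∘ F^n` (expressed by any coefficient system `ψ n` representing it) tends to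
infinity, and `lam` is the Haar measure, characterized by giving each cylinder
on `s` coordinates mass `|A|^{-|s|}`. -/
theorem diffusive_pushes_to_haar (A : Type*) [AddCommGroup A] [Fintype A]
    [MeasurableSpace A] [TopologicalSpace A] [DiscreteTopology A]
    (M : Type*) [Monoid M] [Countable M]
    (F : (M → A) → (M → A)) (hF_cont : Continuous F)
    (hF_add : ∀ x y, F (x + y) = F x + F y)
    (hF_shift : ∀ (e : M) (x : M → A), F (fun m => x (e * m)) = fun m => F x (e * m))
    (μ : Measure (M → A)) [IsProbabilityMeasure μ] (hμ : HarmonicallyMixing μ)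
    (hdiff : ∀ χ : M → AddChar A ℂ, {m | χ m ≠ 1}.Finite → (∃ m, χ m ≠ 1) →
      ∀ ψ : ℕ → M → AddChar A ℂ, (∀ n, {m | ψ n m ≠ 1}.Finite) →
      (∀ (n : ℕ) (a : M → A), charEval (ψ n) a = charEval χ (F^[n] a)) →
      Tendsto (fun n => ({m | ψ n m ≠ 1}).ncard) atTop atTop)
    (lam : Measure (M → A)) [IsProbabilityMeasure lam]
    (hlam : ∀ (s : Finset M) (f : M → A),
      lam {a | ∀ m ∈ s, a m = f m} = (1 / (Fintype.card A : ENNReal)) ^ s.card) :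
    ∀ g : (M → A) → ℂ, Continuous g →
      Tendsto (fun n => ∫ a, g a ∂(μ.map F^[n])) atTop (nhds (∫ a, g a ∂lam)) := by
  classical
  intro g hg
  -- measurability structure on `A` and on the configuration space
  haveI hDisc : DiscreteMeasurableSpace A := ⟨fun S => allMeasurable (1 : M) lam hlam S⟩
  haveI : BorelSpace A := by
    constructor
    rw [borel_eq_top_of_discrete]
    exact MeasurableSpace.ext fun S => ⟨fun _ => MeasurableSpace.measurableSet_top,
      fun _ => DiscreteMeasurableSpace.forall_measurableSet S⟩
  haveI : BorelSpace (M → A) := Pi.borelSpace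
  haveI : Nonempty (M → A) := ⟨0⟩
  -- basic facts about iterates of F
  have hF0 : F 0 = 0 := by
    have h : F 0 = F 0 + F 0 := by rw [← hF_add, add_zero]
    exact left_eq_add.mp h
  have hFn0 : ∀ n : ℕ, F^[n] 0 = 0 := fun n => Function.iterate_fixed hF0 n
  have hFn_add : ∀ (n : ℕ) (x y : M → A), F^[n] (x + y) = F^[n] x + F^[n] y := by
    intro n
    induction n with
    | zero => intro x y; simp
    | succ n ih =>
        intro x y
        rw [Function.iterate_succ_apply', Function.iterate_succ_apply',
          Function.iterate_succ_apply', ih, hF_add]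
  have hFn_cont : ∀ n : ℕ, Continuous (F^[n]) := fun n => hF_cont.iterate n
  have hFn_meas : ∀ n : ℕ, Measurable (F^[n]) := fun n => (hFn_cont n).measurable
  have hprob : ∀ n : ℕ, IsProbabilityMeasure (μ.map F^[n]) := fun n =>
    Measure.isProbabilityMeasure_map (hFn_meas n).aemeasurable
  -- integrability of continuous functions
  have hint : ∀ (p : C(M → A, ℂ)) (ν : Measure (M → A)), IsProbabilityMeasure ν →
      Integrable (⇑p) ν := by
    intro p ν hν
    haveI := hν
    obtain ⟨x0, -, hx0⟩ := isCompact_univ.exists_isMaxOn Set.univ_nonempty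
      (continuous_norm.comp p.continuous).continuousOn
    exact ⟨p.continuous.measurable.aestronglyMeasurable,
      HasFiniteIntegral.of_bounded (C := ‖p x0‖)
        (Eventually.of_forall fun x => isMaxOn_iff.mp hx0 x trivial)⟩
  -- convergence of character integrals
  have hchar : ∀ χ : M → AddChar A ℂ, {m | χ m ≠ 1}.Finite →
      Tendsto (fun n => ∫ a, charEval χ a ∂(μ.map F^[n])) atTop
        (nhds (∫ a, charEval χ a ∂lam)) := by
    intro χ hχ
    by_cases hne : ∃ m, χ m ≠ 1
    · rw [integral_charEval_haar lam hlam χ hχ hne]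
      have hex : ∀ n : ℕ, ∃ ψ : M → AddChar A ℂ, {m | ψ m ≠ 1}.Finite ∧
          ∀ a, charEval ψ a = charEval χ (F^[n] a) := by
        intro n
        refine exists_coeffs ((charEval_continuous χ hχ).comp (hFn_cont n)) ?_ ?_
        · show charEval χ (F^[n] 0) = 1
          rw [hFn0 n, charEval_zero]
        · intro x y
          show charEval χ (F^[n] (x + y)) = _
          rw [hFn_add n x y, charEval_add χ hχ]
      choose ψf hψfin hψeq using hex
      have hrank := hdiff χ hχ hne ψf hψfin hψeq
      have hieq : ∀ n, ∫ a, charEval χ a ∂(μ.map F^[n]) = ∫ a, charEval (ψf n) a ∂μ := by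
        intro n
        rw [integral_map (hFn_meas n).aemeasurable
          ((charEval_continuous χ hχ).measurable).aestronglyMeasurable]
        exact (integral_congr_ae (Eventually.of_forall fun a => hψeq n a)).symm
      simp only [hieq]
      rw [Metric.tendsto_atTop]
      intro ε hε
      obtain ⟨R, hR⟩ := hμ ε hε
      obtain ⟨N, hN⟩ := Filter.eventually_atTop.mp (hrank.eventually_gt_atTop R)
      refine ⟨N, fun n hn => ?_⟩
      rw [dist_zero_right]
      exact hR (ψf n) (hψfin n) (hN n hn)
    · push_neg at hne
      have hone : ∀ a : M → A, charEval χ a = 1 := by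
        intro a
        unfold charEval
        have h1 : ∀ m : M, χ m (a m) = 1 := fun m => by rw [hne m]; simp
        simp only [h1]
        exact finprod_one
      have h1 : ∀ (ν : Measure (M → A)), IsProbabilityMeasure ν →
          ∫ a, charEval χ a ∂ν = 1 := by
        intro ν hν
        haveI := hν
        rw [integral_congr_ae (Eventually.of_forall hone)]
        simp
      rw [h1 lam inferInstance]
      have h2 : ∀ n, ∫ a, charEval χ a ∂(μ.map F^[n]) = 1 := fun n => h1 _ (hprob n)
      simp only [h2]
      exact tendsto_const_nhds
  -- the star subalgebra generated by characters
  set gens : Set C(M → A, ℂ) :=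
    {p | ∃ χ : M → AddChar A ℂ, {m | χ m ≠ 1}.Finite ∧ ⇑p = charEval χ} with hgens
  have h1mem : (1 : C(M → A, ℂ)) ∈ gens := by
    refine ⟨fun _ => 1, by simp, ?_⟩
    funext a
    show (1 : ℂ) = charEval (fun _ : M => (1 : AddChar A ℂ)) a
    rw [charEval_eq_prod (fun _ : M => (1 : AddChar A ℂ)) (s := ∅) (by simp) a]
    simp
  have hmulgen : ∀ p ∈ gens, ∀ q ∈ gens, p * q ∈ gens := by
    rintro p ⟨χ, hχ, hp⟩ q ⟨χ', hχ', hq⟩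
    refine ⟨fun m => χ m * χ' m, ?_, ?_⟩
    · refine (hχ.union hχ').subset fun m hm => ?_
      by_contra hmm
      simp only [Set.mem_union, Set.mem_setOf_eq, not_or, not_not] at hmm
      exact hm (show χ m * χ' m = 1 by rw [hmm.1, hmm.2, mul_one])
    · funext a
      show p a * q a = _
      rw [show p a = charEval χ a from congrFun hp a,
        show q a = charEval χ' a from congrFun hq a]
      have hsub1 : {m | χ m ≠ 1} ⊆ ↑(hχ.union hχ').toFinset := by simp
      have hsub2 : {m | χ' m ≠ 1} ⊆ ↑(hχ.union hχ').toFinset := by simp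
      have hsub3 : {m | χ m * χ' m ≠ 1} ⊆ ↑(hχ.union hχ').toFinset := by
        intro m hm
        have hm' : χ m * χ' m ≠ 1 := hm
        simp only [Set.Finite.coe_toFinset, Set.mem_union, Set.mem_setOf_eq]
        by_contra hmm
        simp only [not_or, not_not] at hmm
        exact hm' (by rw [hmm.1, hmm.2, mul_one])
      rw [charEval_eq_prod χ hsub1 a, charEval_eq_prod χ' hsub2 a,
        charEval_eq_prod _ hsub3 a, ← Finset.prod_mul_distrib]
      exact Finset.prod_congr rfl fun m _ => (AddChar.mul_apply _ _ _).symm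
  have hstargen : ∀ p ∈ gens, star p ∈ gens := by
    rintro p ⟨χ, hχ, hp⟩
    refine ⟨fun m => (χ m)⁻¹, ?_, ?_⟩
    · refine hχ.subset fun m hm => ?_
      simp only [Set.mem_setOf_eq] at hm ⊢
      intro h1
      exact hm (by rw [h1, inv_one])
    · funext a
      show star (p a) = _
      rw [show p a = charEval χ a from congrFun hp a]
      have hsub1 : {m | χ m ≠ 1} ⊆ ↑hχ.toFinset := by simp
      have hsub2 : {m | (χ m)⁻¹ ≠ 1} ⊆ ↑hχ.toFinset := by
        intro m hm
        simp only [Set.Finite.coe_toFinset, Set.mem_setOf_eq] at hm ⊢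
        intro h1
        exact hm (by rw [h1, inv_one])
      have hinv : charEval (fun m => (χ m)⁻¹) a = (charEval χ a)⁻¹ := by
        rw [charEval_eq_prod _ hsub2 a, charEval_eq_prod χ hsub1 a,
          ← Finset.prod_inv_distrib]
        exact Finset.prod_congr rfl fun m _ => AddChar.inv_apply' _ _
      rw [hinv, Complex.inv_eq_conj (norm_charEval χ hχ a)]
      rfl
  set W : Submodule ℂ C(M → A, ℂ) := Submodule.span ℂ gens with hW
  have hWmul : ∀ p ∈ W, ∀ q ∈ W, p * q ∈ W := by
    intro p hp q hq
    have h2 : W * W ≤ W := by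
      rw [hW, Submodule.span_mul_span]
      exact Submodule.span_le.mpr
        (Set.mul_subset_iff.mpr fun x hx y hy => Submodule.subset_span (hmulgen x hx y hy))
    exact h2 (Submodule.mul_mem_mul hp hq)
  let SAlg : StarSubalgebra ℂ C(M → A, ℂ) :=
    { carrier := ↑W
      mul_mem' := fun {p q} hp hq => hWmul p hp q hq
      one_mem' := Submodule.subset_span h1mem
      add_mem' := fun {p q} hp hq => W.add_mem hp hq
      zero_mem' := W.zero_mem
      algebraMap_mem' := fun z => by
        rw [Algebra.algebraMap_eq_smul_one]
        exact W.smul_mem z (Submodule.subset_span h1mem)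
      star_mem' := fun {p} hp => by
        refine Submodule.span_induction (p := fun x _ => star x ∈ W)
          ?_ ?_ ?_ ?_ hp
        · exact fun x hx => Submodule.subset_span (hstargen x hx)
        · show star (0 : C(M → A, ℂ)) ∈ W
          rw [star_zero]; exact W.zero_mem
        · intro x y _ _ ihx ihy
          show star (x + y) ∈ W
          rw [star_add]; exact W.add_mem ihx ihy
        · intro z x _ ih
          show star (z • x) ∈ W
          rw [star_smul]; exact W.smul_mem _ ih }
  have hsepp : SAlg.SeparatesPoints := by
    intro x y hxy
    obtain ⟨m, hm⟩ : ∃ m, x m ≠ y m := by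
      by_contra h
      push_neg at h
      exact hxy (funext h)
    obtain ⟨ψ0, hψ0⟩ := AddChar.exists_apply_ne_zero.mpr (sub_ne_zero.mpr hm)
    set χ : M → AddChar A ℂ := fun m' => if m' = m then ψ0 else 1 with hχdef
    have hχfin : {m' | χ m' ≠ 1}.Finite := by
      refine (Set.finite_singleton m).subset fun m' hm' => ?_
      simp only [Set.mem_setOf_eq, hχdef] at hm'
      by_contra h
      simp only [Set.mem_singleton_iff] at h
      exact hm' (by rw [if_neg h])
    have hc : Continuous (charEval χ) := charEval_continuous χ hχfin
    have hval : ∀ a : M → A, charEval χ a = ψ0 (a m) := by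
      intro a
      have hsub : {m' | χ m' ≠ 1} ⊆ ↑({m} : Finset M) := by
        intro m' hm'
        simp only [Set.mem_setOf_eq, hχdef] at hm'
        simp only [Finset.coe_singleton, Set.mem_singleton_iff]
        by_contra h
        exact hm' (by rw [if_neg h])
      rw [charEval_eq_prod χ hsub a, Finset.prod_singleton]
      simp [hχdef]
    refine ⟨charEval χ, ⟨⟨charEval χ, hc⟩, Submodule.subset_span ⟨χ, hχfin, rfl⟩, rfl⟩, ?_⟩
    intro heq
    rw [hval x, hval y] at heq
    apply hψ0
    have hy0 : ψ0 (y m) ≠ 0 := by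
      intro h0
      have hny := AddChar.norm_apply ψ0 (y m)
      rw [h0] at hny
      simp at hny
    rw [sub_eq_add_neg, AddChar.map_add_eq_mul, AddChar.map_neg_eq_inv, heq]
    exact mul_inv_cancel₀ hy0
  have htop : SAlg.topologicalClosure = ⊤ :=
    ContinuousMap.starSubalgebra_topologicalClosure_eq_top_of_separatesPoints SAlg hsepp
  -- convergence for every element of W
  have hWconv : ∀ p : C(M → A, ℂ), p ∈ W →
      Tendsto (fun n => ∫ a, p a ∂(μ.map F^[n])) atTop (nhds (∫ a, p a ∂lam)) := by
    intro p hp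
    refine Submodule.span_induction
      (p := fun q _ => Tendsto (fun n => ∫ a, q a ∂(μ.map F^[n])) atTop
        (nhds (∫ a, q a ∂lam))) ?_ ?_ ?_ ?_ hp
    · rintro q ⟨χ, hχ, hq⟩
      simp only [hq]
      exact hchar χ hχ
    · simp only [ContinuousMap.coe_zero, Pi.zero_apply, integral_zero]
      exact tendsto_const_nhds
    · intro q r hq hr ihq ihr
      have hrw : ∀ (ν : Measure (M → A)), IsProbabilityMeasure ν →
          ∫ a, (q + r) a ∂ν = (∫ a, q a ∂ν) + ∫ a, r a ∂ν := by
        intro ν hν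
        haveI := hν
        simp only [ContinuousMap.add_apply]
        exact integral_add (hint q ν hν) (hint r ν hν)
      have heq1 : (fun n => ∫ a, (q + r) a ∂(μ.map F^[n]))
          = fun n => (∫ a, q a ∂(μ.map F^[n])) + ∫ a, r a ∂(μ.map F^[n]) :=
        funext fun n => hrw _ (hprob n)
      rw [heq1, hrw lam inferInstance]
      exact ihq.add ihr
    · intro z q hq ih
      have hrw : ∀ ν : Measure (M → A), ∫ a, (z • q) a ∂ν = z • ∫ a, q a ∂ν := by
        intro ν
        simp only [ContinuousMap.smul_apply]
        exact integral_smul z _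
      have heq1 : (fun n => ∫ a, (z • q) a ∂(μ.map F^[n]))
          = fun n => z • ∫ a, q a ∂(μ.map F^[n]) := funext fun n => hrw _
      rw [heq1, hrw lam]
      exact ih.const_smul z
  -- conclusion by density
  set gc : C(M → A, ℂ) := ⟨g, hg⟩ with hgc
  suffices h : Tendsto (fun n => ∫ a, gc a ∂(μ.map F^[n])) atTop (nhds (∫ a, gc a ∂lam)) by
    exact h
  have hgmem : gc ∈ closure (SAlg : Set C(M → A, ℂ)) := by
    have h1 : gc ∈ SAlg.topologicalClosure := by rw [htop]; trivial
    exact h1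
  rw [Metric.tendsto_atTop]
  intro ε hε
  obtain ⟨p, hpS, hpd⟩ := Metric.mem_closure_iff.mp hgmem (ε / 3) (by linarith)
  have hpW : p ∈ W := hpS
  obtain ⟨N, hN⟩ := Metric.tendsto_atTop.mp (hWconv p hpW) (ε / 3) (by linarith)
  refine ⟨N, fun n hn => ?_⟩
  have hb : ∀ (ν : Measure (M → A)), IsProbabilityMeasure ν →
      dist (∫ a, gc a ∂ν) (∫ a, p a ∂ν) ≤ dist gc p := by
    intro ν hν
    haveI := hν
    rw [dist_eq_norm, ← integral_sub (hint gc ν hν) (hint p ν hν)]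
    calc ‖∫ a, (gc a - p a) ∂ν‖ ≤ dist gc p * (ν Set.univ).toReal := by
          refine norm_integral_le_of_norm_le_const (Eventually.of_forall fun a => ?_)
          calc ‖gc a - p a‖ = ‖(gc - p) a‖ := by simp
            _ ≤ ‖gc - p‖ := ContinuousMap.norm_coe_le_norm _ a
            _ = dist gc p := (dist_eq_norm gc p).symm
      _ = dist gc p := by simp [measure_univ]
  haveI := hprob n
  calc dist (∫ a, gc a ∂(μ.map F^[n])) (∫ a, gc a ∂lam)
      ≤ dist (∫ a, gc a ∂(μ.map F^[n])) (∫ a, p a ∂(μ.map F^[n]))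
        + dist (∫ a, p a ∂(μ.map F^[n])) (∫ a, p a ∂lam)
        + dist (∫ a, p a ∂lam) (∫ a, gc a ∂lam) := dist_triangle4 _ _ _ _
    _ < ε / 3 + ε / 3 + ε / 3 := by
        have hb1 := (hb (μ.map F^[n]) (hprob n)).trans_lt hpd
        have hb3 := (hb lam inferInstance).trans_lt hpd
        rw [dist_comm] at hb3
        have hb2 := hN n hn
        linarith
    _ = ε := by ring
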